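/- There exist constants C > 0 and c with 0 < c ≤ 125/2 such that for all n ≥ 1: r_6(ℤ_{125}^n) ≥ C · 85^n / n^c. -/

import Mathlib

/-!
Take a set `D ⊆ ℤ/125` with a weight `w : D → {0, …, 7}` that is convex along every 6-term
progression inside `D`, and affine along one only when its difference `b` satisfies `5b = 0`.
For an arithmetic progression inside a level set `{x ∈ Dⁿ : ∑ⱼ w(xⱼ) = t}`, the coordinatewise
second differences of the weights are nonnegative and sum to zero, so they all vanish; hence
`5d = 0` and the first and last terms coincide. Pigeonholing over the `7n + 1` levels gives a
level set of size at least `85ⁿ / (7n + 1)`.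

Such a `D` is the preimage of a 17-element set in `ℤ/25` along which every 6-term progression
with nonzero difference has a non-affine convex weight profile (checked exhaustively); a
difference `b ≡ 0 mod 25` in `ℤ/125` has `5b = 0`.
-/

/-- `S ⊆ (ℤ/mℤ)^n` contains no proper `k`-term arithmetic progression. -/
def ProgFree (m k : ℕ) {n : ℕ} (S : Finset (Fin n → ZMod m)) : Prop :=
  ¬ ∃ x d : Fin n → ZMod m,
      (Function.Injective fun i : Fin k => x + (i : ℕ) • d) ∧
      ∀ i : Fin k, x + (i : ℕ) • d ∈ S

/-- Maximal size of a subset of `(ℤ/mℤ)^n` without a proper `k`-term AP. -/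
noncomputable def rAP (k m n : ℕ) : ℕ :=
  sSup {c : ℕ | ∃ S : Finset (Fin n → ZMod m), ProgFree m k S ∧ S.card = c}

open Finset

section WeightsAlongAPs

variable {G H : Type*} [AddCommMonoid G] [AddCommMonoid H]

def ConvexAlongAPs (k : ℕ) (D : Finset G) (w : G → ℕ) : Prop :=
  ∀ a b : G, (∀ i < k, a + i • b ∈ D) → ∀ i < k - 2,
    2 * w (a + (i + 1) • b) ≤ w (a + i • b) + w (a + (i + 2) • b)

def AffineAlongAPOnlyIf (k : ℕ) (D : Finset G) (w : G → ℕ) (P : G → Prop) : Prop :=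
  ∀ a b : G, (∀ i < k, a + i • b ∈ D) → (∀ i < k - 2,
    2 * w (a + (i + 1) • b) = w (a + i • b) + w (a + (i + 2) • b)) → P b

variable [Fintype G] [DecidableEq H] {k : ℕ} {D : Finset H} {w : H → ℕ}

theorem ConvexAlongAPs.comap (π : G →+ H) (h : ConvexAlongAPs k D w) :
    ConvexAlongAPs k {a | π a ∈ D} (w ∘ π) := by
  intro a b hmem i hi
  simp only [mem_filter, mem_univ, true_and, map_add, map_nsmul] at hmem
  simpa only [Function.comp_apply, map_add, map_nsmul] using h (π a) (π b) hmem i hi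

theorem AffineAlongAPOnlyIf.comap {P : H → Prop} {Q : G → Prop} (π : G →+ H)
    (h : AffineAlongAPOnlyIf k D w P) (hPQ : ∀ b, P (π b) → Q b) :
    AffineAlongAPOnlyIf k {a | π a ∈ D} (w ∘ π) Q := by
  intro a b hmem haff
  simp only [mem_filter, mem_univ, true_and, map_add, map_nsmul] at hmem
  simp only [Function.comp_apply, map_add, map_nsmul] at haff
  exact hPQ b (h (π a) (π b) hmem haff)

end WeightsAlongAPs

section LevelSets

variable {m k : ℕ} (D : Finset (ZMod m)) (w : ZMod m → ℕ)

def weightLevel (n t : ℕ) : Finset (Fin n → ZMod m) :=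
  {x ∈ Fintype.piFinset fun _ => D | ∑ j, w (x j) = t}

theorem progFree_weightLevel (hk : 2 ≤ k) (hconv : ConvexAlongAPs k D w)
    (haff : AffineAlongAPOnlyIf k D w fun b => (k - 1) • b = 0) (n t : ℕ) :
    ProgFree m k (weightLevel D w n t) := by
  rintro ⟨x, d, hinj, hmem⟩
  have hD : ∀ j, ∀ i < k, x j + i • d j ∈ D := fun j i hi => by
    have := (mem_filter.mp (hmem ⟨i, hi⟩)).1
    exact Fintype.mem_piFinset.mp this j
  have hsum : ∀ i < k, ∑ j, w (x j + i • d j) = t := fun i hi =>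
    (mem_filter.mp (hmem ⟨i, hi⟩)).2
  -- Each coordinate's second difference is nonnegative and they sum to `t - 2t + t = 0`.
  have haffine : ∀ j, ∀ i < k - 2,
      2 * w (x j + (i + 1) • d j) = w (x j + i • d j) + w (x j + (i + 2) • d j) := by
    intro j i hi
    have htot : ∑ j, 2 * w (x j + (i + 1) • d j)
        = ∑ j, (w (x j + i • d j) + w (x j + (i + 2) • d j)) := by
      rw [sum_add_distrib, ← mul_sum, hsum _ (by omega), hsum _ (by omega), hsum _ (by omega),
        two_mul]
    exact (sum_eq_sum_iff_of_le fun j _ => hconv _ _ (hD j) i hi).mp htot j (mem_univ j)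
  have hd : (k - 1) • d = 0 := funext fun j => haff _ _ (hD j) (haffine j)
  have hends : (⟨0, by omega⟩ : Fin k) = ⟨k - 1, by omega⟩ := hinj (by simp [hd])
  simp only [Fin.mk.injEq] at hends
  omega

theorem exists_weightLevel_card_ge {W : ℕ} (hW : ∀ a ∈ D, w a ≤ W) (n : ℕ) :
    ∃ t, (#D : ℝ) ^ n / (n * W + 1) ≤ #(weightLevel D w n t) := by
  have hmaps :
      ∀ x ∈ Fintype.piFinset (fun _ : Fin n => D), ∑ j, w (x j) ∈ range (n * W + 1) := by
    intro x hx
    have := sum_le_sum fun j (_ : j ∈ univ) => hW (x j) (Fintype.mem_piFinset.mp hx j)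
    simp only [sum_const, card_univ, Fintype.card_fin, smul_eq_mul] at this
    exact mem_range.mpr (by omega)
  obtain ⟨t, -, ht⟩ :=
    exists_le_card_fiber_of_nsmul_le_card_of_maps_to hmaps nonempty_range_add_one
    (b := (#D : ℝ) ^ n / (n * W + 1)) (by
      rw [card_range, nsmul_eq_mul, Fintype.card_piFinset_const]
      push_cast
      rw [mul_div_cancel₀ _ (by positivity)])
  exact ⟨t, ht⟩

end LevelSets

theorem card_le_rAP {m k n : ℕ} [NeZero m] {S : Finset (Fin n → ZMod m)}
    (hS : ProgFree m k S) : #S ≤ rAP k m n :=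
  le_csSup ⟨Fintype.card (Fin n → ZMod m), by rintro _ ⟨T, -, rfl⟩; exact card_le_univ T⟩
    ⟨S, hS, rfl⟩

theorem card_pow_div_le_rAP {m k W : ℕ} [NeZero m] {D : Finset (ZMod m)} {w : ZMod m → ℕ}
    (hk : 2 ≤ k) (hconv : ConvexAlongAPs k D w)
    (haff : AffineAlongAPOnlyIf k D w fun b => (k - 1) • b = 0) (hW : ∀ a ∈ D, w a ≤ W)
    (n : ℕ) :
    (#D : ℝ) ^ n / (n * W + 1) ≤ rAP k m n := by
  obtain ⟨t, ht⟩ := exists_weightLevel_card_ge D w hW n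
  exact ht.trans (by exact_mod_cast card_le_rAP (progFree_weightLevel D w hk hconv haff n t))

def D25 : Finset (ZMod 25) := {0, 2, 4, 6, 7, 8, 9, 11, 12, 13, 14, 16, 18, 21, 22, 23, 24}

-- Only the values on `D25` matter.
def weight25 : ZMod 25 → ℕ :=
  ![1, 0, 1, 0, 1, 0, 1, 3, 1, 1, 0, 1, 1, 1, 5, 0, 2, 0, 1, 0, 0, 7, 1, 4, 1]

theorem convexAlongAPs_D25 : ConvexAlongAPs 6 D25 weight25 := by
  unfold ConvexAlongAPs; decide +kernel

theorem affineAlongAPOnlyIf_D25 : AffineAlongAPOnlyIf 6 D25 weight25 fun b => b = 0 := by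
  unfold AffineAlongAPOnlyIf; decide +kernel

def reduce125 : ZMod 125 →+ ZMod 25 := (ZMod.castHom (by norm_num) (ZMod 25)).toAddMonoidHom

def D125 : Finset (ZMod 125) := {a | reduce125 a ∈ D25}

theorem card_D125 : #D125 = 85 := by decide +kernel

theorem weight25_reduce125_le : ∀ a ∈ D125, (weight25 ∘ reduce125) a ≤ 7 := by decide +kernel

theorem nsmul_five_eq_zero_of_reduce125 : ∀ b : ZMod 125, reduce125 b = 0 → 5 • b = 0 := by
  decide +kernel

theorem stmt13 :
    ∃ C c : ℝ, 0 < C ∧ 0 < c ∧ c ≤ 125 / 2 ∧ ∀ n : ℕ, 1 ≤ n →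
      C * 85 ^ n / (n : ℝ) ^ c ≤ (rAP 6 125 n : ℝ) := by
  refine ⟨1 / 8, 1, by norm_num, by norm_num, by norm_num, fun n hn => ?_⟩
  have hbound := card_pow_div_le_rAP (D := D125) (by norm_num) (convexAlongAPs_D25.comap reduce125)
    (affineAlongAPOnlyIf_D25.comap reduce125 nsmul_five_eq_zero_of_reduce125)
    weight25_reduce125_le n
  rw [card_D125] at hbound
  have hn' : (1 : ℝ) ≤ n := by exact_mod_cast hn
  calc 1 / 8 * 85 ^ n / (n : ℝ) ^ (1 : ℝ) = (85 : ℝ) ^ n / (8 * n) := by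
        rw [Real.rpow_one]; ring
    _ ≤ (85 : ℝ) ^ n / (n * 7 + 1) := by gcongr; linarith
    _ ≤ rAP 6 125 n := by exact_mod_cast hbound
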